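/- For the layer-norm hash function φ(z) = (z, 1, -z, -1)/√(2z² + 2) defined on natural numbers, the inner product φ(i)·φ(j) equals 1 if and only if i = j. -/

import Mathlib

/-- The layer-norm hash: φ(z) = (z, 1, -z, -1) / √(2z² + 2). -/
noncomputable def lnHash (z : ℕ) : Fin 4 → ℝ :=
  fun i => (![(z : ℝ), 1, -(z : ℝ), -1] i) / Real.sqrt (2 * (z : ℝ) ^ 2 + 2)

/-! Each `φ(z)` is a unit vector, so `φ(i) · φ(j) = 1` forces `φ(i) = φ(j)` (equality case of
Cauchy–Schwarz); and `φ` is injective because `z` is the ratio of the first two coordinates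
of `φ(z)`. -/

lemma real_inner_toLp_toLp {ι : Type*} [Fintype ι] (x y : ι → ℝ) :
    inner ℝ (WithLp.toLp 2 x) (WithLp.toLp 2 y) = x ⬝ᵥ y := by
  rw [EuclideanSpace.inner_toLp_toLp, star_trivial, dotProduct_comm]

lemma lnHash_apply_one_pos (z : ℕ) : 0 < lnHash z 1 := by
  simpa [lnHash] using Real.sqrt_pos.2 (by positivity)

lemma lnHash_apply_zero (z : ℕ) : lnHash z 0 = z * lnHash z 1 := by
  simp [lnHash, div_eq_mul_inv]

lemma lnHash_injective : Function.Injective lnHash := by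
  intro i j h
  have ratio (z : ℕ) : (z : ℝ) = lnHash z 0 / lnHash z 1 := by
    rw [lnHash_apply_zero, mul_div_cancel_right₀ _ (lnHash_apply_one_pos z).ne']
  exact_mod_cast (ratio i).trans (h ▸ ratio j).symm

lemma sum_sq_lnHash (z : ℕ) : ∑ k, lnHash z k ^ 2 = 1 := by
  have hpos : (0 : ℝ) < 2 * (z : ℝ) ^ 2 + 2 := by positivity
  simp only [lnHash, Fin.sum_univ_four, div_pow, Real.sq_sqrt hpos.le, Matrix.cons_val_zero,
    Matrix.cons_val_one, Matrix.cons_val, one_pow, even_two, Even.neg_pow]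
  field_simp
  ring

lemma norm_toLp_lnHash (z : ℕ) : ‖WithLp.toLp 2 (lnHash z)‖ = 1 := by
  simp [EuclideanSpace.norm_eq, sum_sq_lnHash]

theorem lnHash_inner_eq_one_iff (i j : ℕ) :
    (∑ k : Fin 4, lnHash i k * lnHash j k) = 1 ↔ i = j := by
  change lnHash i ⬝ᵥ lnHash j = 1 ↔ i = j
  rw [← real_inner_toLp_toLp,
    inner_eq_one_iff_of_norm_eq_one (norm_toLp_lnHash i) (norm_toLp_lnHash j),
    (WithLp.toLp_injective 2).eq_iff, lnHash_injective.eq_iff]
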